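/- Dinkelbach's lemma: let P be a compact topological space, f, g : P → ℝ continuous with g(μ) > 0 for all μ ∈ P, P nonempty, and define F(q) := sup over μ ∈ P of (f(μ) − q·g(μ)). Then for q₀ ∈ ℝ, q₀ equals the supremum over μ ∈ P of f(μ)/g(μ) if and only if F(q₀) = 0. -/

import Mathlib

open Set

theorem ciSup_eq_iff_forall_le_and_exists_eq_of_continuous {α X : Type*}
    [ConditionallyCompleteLinearOrder α] [TopologicalSpace α] [ClosedIciTopology α]
    [TopologicalSpace X] [CompactSpace X] [Nonempty X] {u : X → α} (hu : Continuous u) {c : α} :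
    ⨆ x, u x = c ↔ (∀ x, u x ≤ c) ∧ ∃ x, u x = c := by
  constructor
  · rintro rfl
    obtain ⟨x₀, -, hmax⟩ := isCompact_univ.exists_isMaxOn univ_nonempty hu.continuousOn
    have hsup : ⨆ x, u x = u x₀ :=
      ciSup_eq_of_forall_le_of_forall_lt_exists_gt (fun x => hmax (mem_univ x))
        fun _ hw => ⟨x₀, hw⟩
    exact ⟨fun x => hsup ▸ hmax (mem_univ x), x₀, hsup.symm⟩
  · rintro ⟨hle, x₀, rfl⟩
    exact ciSup_eq_of_forall_le_of_forall_lt_exists_gt hle fun _ hw => ⟨x₀, hw⟩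

section Field

variable {𝕜 : Type*} [Field 𝕜]

theorem div_le_iff_sub_mul_nonpos [LinearOrder 𝕜] [IsStrictOrderedRing 𝕜] {a b q : 𝕜}
    (hb : 0 < b) : a / b ≤ q ↔ a - q * b ≤ 0 := by
  rw [div_le_iff₀ hb, sub_nonpos, mul_comm]

theorem div_eq_iff_sub_mul_eq_zero {a b q : 𝕜} (hb : b ≠ 0) : a / b = q ↔ a - q * b = 0 := by
  rw [div_eq_iff hb, sub_eq_zero, mul_comm]

end Field

theorem dinkelbach_lemma
    {P : Type*} [TopologicalSpace P] [CompactSpace P] [Nonempty P]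
    (f g : P → ℝ) (hf : Continuous f) (hg : Continuous g)
    (hgpos : ∀ μ, 0 < g μ) (q₀ : ℝ) :
    q₀ = (⨆ μ : P, f μ / g μ) ↔ (⨆ μ : P, f μ - q₀ * g μ) = 0 := by
  have hratio : Continuous fun μ => f μ / g μ := hf.div hg fun μ => (hgpos μ).ne'
  have hgap : Continuous fun μ => f μ - q₀ * g μ := by fun_prop
  rw [eq_comm, ciSup_eq_iff_forall_le_and_exists_eq_of_continuous hratio,
    ciSup_eq_iff_forall_le_and_exists_eq_of_continuous hgap]
  simp only [div_le_iff_sub_mul_nonpos (hgpos _), div_eq_iff_sub_mul_eq_zero (hgpos _).ne']
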